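/- For every natural number k, if P ∈ ℚ[X] satisfies P.eval n = ∑_{i=1}^{n} i^k for all n ∈ ℕ, then the coefficient of X^{k+1} in P equals 1/(k+1). -/

import Mathlib

open Finset Polynomial

/-!
By Faulhaber's formula the power sum `∑_{i=1}^n i^k` is the value at `n` of an explicit polynomial
of degree `k + 1` whose top coefficient is `B'₀ / (k + 1) = 1 / (k + 1)`. Two rational polynomials
agreeing on infinitely many points are equal, so `P` is that polynomial.
-/

theorem Polynomial.eq_of_eval_natCast_eq {R : Type*} [CommRing R] [IsDomain R] [CharZero R]
    {p q : R[X]} (h : ∀ n : ℕ, p.eval (n : R) = q.eval (n : R)) : p = q :=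
  eq_of_infinite_eval_eq p q <| Set.infinite_of_injective_forall_mem Nat.cast_injective h

noncomputable def faulhaberPoly (k : ℕ) : ℚ[X] :=
  ∑ i ∈ range (k + 1), C (bernoulli' i * (k + 1).choose i / (k + 1)) * X ^ (k + 1 - i)

theorem eval_faulhaberPoly (k n : ℕ) :
    (faulhaberPoly k).eval (n : ℚ) = ∑ i ∈ Icc 1 n, (i : ℚ) ^ k := by
  rw [← Ico_add_one_right_eq_Icc, sum_Ico_pow, faulhaberPoly]
  simp only [eval_finsetSum, eval_mul, eval_C, eval_pow, eval_X]
  exact sum_congr rfl fun i _ => by ring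

theorem coeff_faulhaberPoly_succ (k : ℕ) : (faulhaberPoly k).coeff (k + 1) = 1 / (k + 1) := by
  rw [faulhaberPoly, finsetSum_coeff, sum_eq_single_of_mem 0 (mem_range.mpr k.succ_pos)]
  · simp
  · intro i _ hi0
    rw [coeff_C_mul, coeff_X_pow, if_neg (by grind), mul_zero]

theorem stmt_3 (k : ℕ) (P : ℚ[X])
    (hP : ∀ n : ℕ, P.eval (n : ℚ) = ∑ i ∈ Icc 1 n, (i : ℚ) ^ k) :
    P.coeff (k + 1) = 1 / (k + 1) := by
  have hP_eq : P = faulhaberPoly k :=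
    eq_of_eval_natCast_eq fun n => (hP n).trans (eval_faulhaberPoly k n).symm
  rw [hP_eq, coeff_faulhaberPoly_succ]
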